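/- If a Kenmotsu manifold of dimension 2n+1 admits a *-Ricci soliton, then its scalar curvature r satisfies ξ(r) = -2(r + 2n(2n+1)), where ξ is the Reeb vector field. -/

import Mathlib

/-- An abstract algebraic model of a `(2n+1)`-dimensional Kenmotsu manifold:
`C` plays the role of the ring of smooth functions on the manifold and vector
fields are modelled as `ℝ`-derivations of `C`.  A global orthonormal frame `e`
is included in order to express traces (Ricci tensor, scalar curvature). -/
structure KenmotsuManifold (n : ℕ) (C : Type*) [CommRing C] [Algebra ℝ C] where
  /-- the Riemannian metric -/
  g : Derivation ℝ C C → Derivation ℝ C C → C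
  /-- the structure `(1,1)`-tensor field -/
  φ : Derivation ℝ C C → Derivation ℝ C C
  /-- the Reeb (characteristic) vector field -/
  ξ : Derivation ℝ C C
  /-- the contact `1`-form -/
  η : Derivation ℝ C C → C
  /-- the Levi-Civita connection -/
  nabla : Derivation ℝ C C → Derivation ℝ C C → Derivation ℝ C C
  /-- a global orthonormal frame, used to take traces -/
  e : Fin (2 * n + 1) → Derivation ℝ C C
  g_symm : ∀ X Y, g X Y = g Y X
  g_add_left : ∀ X Y Z, g (X + Y) Z = g X Z + g Y Z
  g_smul_left : ∀ (f : C) (X Y), g (f • X) Y = f * g X Y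
  g_nondeg : ∀ X, (∀ Y, g X Y = 0) → X = 0
  g_frame : ∀ i j, g (e i) (e j) = if i = j then 1 else 0
  frame_span : ∀ X : Derivation ℝ C C, X = ∑ i, g X (e i) • e i
  phi_phi : ∀ X, φ (φ X) = -X + η X • ξ
  phi_linear : ∀ (f : C) (X Y), φ (f • X + Y) = f • φ X + φ Y
  eta_xi : η ξ = 1
  eta_def : ∀ X, η X = g X ξ
  compat_phi : ∀ X Y, g (φ X) (φ Y) = g X Y - η X * η Y
  nabla_add_left : ∀ X Y Z, nabla (X + Y) Z = nabla X Z + nabla Y Z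
  nabla_smul_left : ∀ (f : C) (X Y), nabla (f • X) Y = f • nabla X Y
  nabla_add_right : ∀ X Y Z, nabla X (Y + Z) = nabla X Y + nabla X Z
  nabla_leibniz : ∀ (X) (f : C) (Y), nabla X (f • Y) = X f • Y + f • nabla X Y
  torsion_free : ∀ X Y, nabla X Y - nabla Y X = ⁅X, Y⁆
  metric_compat : ∀ X Y Z, X (g Y Z) = g (nabla X Y) Z + g Y (nabla X Z)
  /-- the Kenmotsu condition `(∇_X φ)Y = g(φX,Y)ξ - η(Y)φX` -/
  kenmotsu : ∀ X Y, nabla X (φ Y) - φ (nabla X Y) = g (φ X) Y • ξ - η Y • φ X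

namespace KenmotsuManifold

variable {n : ℕ} {C : Type*} [CommRing C] [Algebra ℝ C] (K : KenmotsuManifold n C)

/-- the Riemann curvature tensor `R(X,Y)Z = ∇_X∇_Y Z - ∇_Y∇_X Z - ∇_{[X,Y]}Z` -/
def Rm (X Y Z : Derivation ℝ C C) : Derivation ℝ C C :=
  K.nabla X (K.nabla Y Z) - K.nabla Y (K.nabla X Z) - K.nabla ⁅X, Y⁆ Z

/-- the Ricci tensor `S(X,Y) = trace (Z ↦ R(Z,X)Y)` -/
def S (X Y : Derivation ℝ C C) : C := ∑ i, K.g (K.Rm (K.e i) X Y) (K.e i)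

/-- the Ricci operator `Q`, `g(QX,Y) = S(X,Y)` -/
def Q (X : Derivation ℝ C C) : Derivation ℝ C C := ∑ i, K.S X (K.e i) • K.e i

/-- the scalar curvature `r` -/
def r : C := ∑ i, K.S (K.e i) (K.e i)

/-- the `*`-Ricci tensor `S*(X,Y) = (1/2) trace (Z ↦ R(X,φY)φZ)` -/
noncomputable def Sstar (X Y : Derivation ℝ C C) : C :=
  (2 : ℝ)⁻¹ • ∑ i, K.g (K.Rm X (K.φ Y) (K.φ (K.e i))) (K.e i)

/-- the covariant derivative `(∇_X Q)Y` of the Ricci operator -/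
def nablaQ (X Y : Derivation ℝ C C) : Derivation ℝ C C :=
  K.nabla X (K.Q Y) - K.Q (K.nabla X Y)

/-- the Lie derivative `(£_V g)(X,Y)` of the metric -/
def lieG (V X Y : Derivation ℝ C C) : C :=
  V (K.g X Y) - K.g ⁅V, X⁆ Y - K.g X ⁅V, Y⁆

/-- the Lie derivative `(£_V S)(X,Y)` of the Ricci tensor -/
def lieS (V X Y : Derivation ℝ C C) : C :=
  V (K.S X Y) - K.S ⁅V, X⁆ Y - K.S X ⁅V, Y⁆

/-- `g` is a `*`-Ricci soliton with potential vector field `V` and soliton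
constant `l`: `£_V g + 2S* + 2l g = 0`. -/
def IsStarRicciSoliton (V : Derivation ℝ C C) (l : ℝ) : Prop :=
  ∀ X Y, K.lieG V X Y + 2 * K.Sstar X Y + (2 * l) • K.g X Y = 0

/-- `g` is a gradient almost `*`-Ricci soliton with potential function `f`
(with gradient `F`, i.e. `g(F,X) = Xf`) and soliton function `l`:
`Hess f + S* + l g = 0`. -/
def IsGradAlmostStarRicciSoliton (f : C) (F : Derivation ℝ C C) (l : C) : Prop :=
  (∀ X, K.g F X = X f) ∧ ∀ X Y, K.g (K.nabla X F) Y + K.Sstar X Y + l * K.g X Y = 0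

/-- `M` is `η`-Einstein: `S = α g + β η⊗η`. -/
def IsEtaEinstein : Prop :=
  ∃ α β : C, ∀ X Y, K.S X Y = α * K.g X Y + β * (K.η X * K.η Y)

/- ## Basic linearity -/
section Basic
variable (X Y Z W : Derivation ℝ C C) (f : C)

lemma g_add_right : K.g X (Y + Z) = K.g X Y + K.g X Z := by
  rw [K.g_symm, K.g_add_left, K.g_symm, K.g_symm Z]

lemma g_smul_right : K.g X (f • Y) = f * K.g X Y := by
  rw [K.g_symm, K.g_smul_left, K.g_symm]

lemma g_zero_left : K.g 0 Y = 0 := by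
  have h := K.g_add_left 0 0 Y; simp only [add_zero] at h; linear_combination -h

lemma g_zero_right : K.g X 0 = 0 := by rw [K.g_symm]; exact K.g_zero_left X

lemma g_neg_left : K.g (-X) Y = -K.g X Y := by
  have h := K.g_add_left X (-X) Y; simp only [add_neg_cancel] at h
  rw [K.g_zero_left] at h; linear_combination -h

lemma g_sub_left : K.g (X - Y) Z = K.g X Z - K.g Y Z := by
  rw [sub_eq_add_neg, K.g_add_left, K.g_neg_left, sub_eq_add_neg]

lemma g_neg_right : K.g X (-Y) = -K.g X Y := by
  rw [K.g_symm, K.g_neg_left, K.g_symm]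

lemma g_sub_right : K.g X (Y - Z) = K.g X Y - K.g X Z := by
  rw [K.g_symm, K.g_sub_left, K.g_symm, K.g_symm Z]

lemma g_sum_left {ι : Type*} (s : Finset ι) (F : ι → Derivation ℝ C C) :
    K.g (∑ i ∈ s, F i) Y = ∑ i ∈ s, K.g (F i) Y := by
  classical
  induction s using Finset.induction_on with
  | empty => simpa using K.g_zero_left Y
  | @insert a s h ih => rw [Finset.sum_insert h, Finset.sum_insert h, K.g_add_left, ih]

lemma g_sum_right {ι : Type*} (s : Finset ι) (F : ι → Derivation ℝ C C) :
    K.g X (∑ i ∈ s, F i) = ∑ i ∈ s, K.g X (F i) := by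
  rw [K.g_symm, K.g_sum_left]; exact Finset.sum_congr rfl fun i _ => K.g_symm _ _

/- eta -/
lemma eta_add : K.η (X + Y) = K.η X + K.η Y := by rw [K.eta_def, K.g_add_left, ← K.eta_def, ← K.eta_def]
lemma eta_smul : K.η (f • X) = f * K.η X := by rw [K.eta_def, K.g_smul_left, ← K.eta_def]
lemma eta_zero : K.η (0 : Derivation ℝ C C) = 0 := by rw [K.eta_def, K.g_zero_left]
lemma eta_neg : K.η (-X) = -K.η X := by rw [K.eta_def, K.g_neg_left, ← K.eta_def]
lemma eta_sub : K.η (X - Y) = K.η X - K.η Y := by rw [K.eta_def, K.g_sub_left, ← K.eta_def, ← K.eta_def]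

/- phi -/
lemma phi_zero : K.φ 0 = 0 := by
  have h := K.phi_linear 1 0 0
  simp only [one_smul, add_zero] at h
  have : K.φ (0 : Derivation ℝ C C) + K.φ 0 = K.φ 0 + 0 := by rw [← h, add_zero]
  exact (add_left_cancel this)
lemma phi_add : K.φ (X + Y) = K.φ X + K.φ Y := by
  have h := K.phi_linear 1 X Y; simpa using h
lemma phi_smul : K.φ (f • X) = f • K.φ X := by
  have h := K.phi_linear f X 0; simpa [K.phi_zero] using h
lemma phi_neg : K.φ (-X) = -K.φ X := by
  rw [← neg_one_smul C X, K.phi_smul, neg_one_smul]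
lemma phi_sub : K.φ (X - Y) = K.φ X - K.φ Y := by
  rw [sub_eq_add_neg, K.phi_add, K.phi_neg, sub_eq_add_neg]

/- nabla -/
lemma nabla_zero_right : K.nabla X 0 = 0 := by
  have h := K.nabla_add_right X 0 0
  simp only [add_zero] at h
  have : K.nabla X 0 + K.nabla X 0 = K.nabla X 0 + 0 := by rw [← h, add_zero]
  exact add_left_cancel this
lemma nabla_zero_left : K.nabla 0 Y = 0 := by
  have h := K.nabla_add_left 0 0 Y
  simp only [add_zero] at h
  have : K.nabla 0 Y + K.nabla 0 Y = K.nabla 0 Y + 0 := by rw [← h, add_zero]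
  exact add_left_cancel this
lemma nabla_neg_right : K.nabla X (-Y) = -K.nabla X Y := by
  have h := K.nabla_add_right X Y (-Y)
  rw [add_neg_cancel, K.nabla_zero_right] at h
  linear_combination (norm := module) -h
lemma nabla_neg_left : K.nabla (-X) Y = -K.nabla X Y := by
  have h := K.nabla_add_left X (-X) Y
  rw [add_neg_cancel, K.nabla_zero_left] at h
  linear_combination (norm := module) -h
lemma nabla_sub_right : K.nabla X (Y - Z) = K.nabla X Y - K.nabla X Z := by
  rw [sub_eq_add_neg, K.nabla_add_right, K.nabla_neg_right, sub_eq_add_neg]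
lemma nabla_sub_left : K.nabla (X - Y) Z = K.nabla X Z - K.nabla Y Z := by
  rw [sub_eq_add_neg, K.nabla_add_left, K.nabla_neg_left, sub_eq_add_neg]

/- brackets -/
lemma bracket_smul_right : ⁅X, f • Y⁆ = X f • Y + f • ⁅X, Y⁆ := by
  ext a
  simp only [Derivation.commutator_apply, Derivation.add_apply, Derivation.smul_apply,
    smul_eq_mul, Derivation.leibniz]
  ring
lemma bracket_smul_left : ⁅f • X, Y⁆ = f • ⁅X, Y⁆ - Y f • X := by
  ext a
  simp only [Derivation.commutator_apply, Derivation.sub_apply, Derivation.smul_apply,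
    smul_eq_mul, Derivation.leibniz]
  ring

/- frame facts -/
lemma g_xi_xi : K.g K.ξ K.ξ = 1 := by rw [← K.eta_def, K.eta_xi]

lemma deriv_g_frame (i j : Fin (2*n+1)) : X (K.g (K.e i) (K.e j)) = 0 := by
  rw [K.g_frame]
  by_cases h : i = j <;> simp [h]

lemma g_expand : K.g X Y = ∑ i, K.g X (K.e i) * K.g Y (K.e i) := by
  conv_lhs => rw [K.frame_span X]
  rw [K.g_sum_left]
  exact Finset.sum_congr rfl fun i _ => by rw [K.g_smul_left, K.g_symm (K.e i) Y]

lemma sum_eta_sq : ∑ i, K.η (K.e i) * K.η (K.e i) = 1 := by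
  have h := K.g_expand K.ξ K.ξ
  rw [K.g_xi_xi] at h
  rw [h]
  exact Finset.sum_congr rfl fun i _ => by rw [K.eta_def, K.g_symm]

end Basic

/- helpers for division by reals -/
lemma real_smul_cancel {r : ℝ} (hr : r ≠ 0) {c : C} (h : r • c = 0) : c = 0 := by
  have : r⁻¹ • (r • c) = c := by rw [smul_smul, inv_mul_cancel₀ hr, one_smul]
  rw [← this, h, smul_zero]

lemma half_cancel {c : C} (h : c + c = 0) : c = 0 := by
  refine real_smul_cancel (two_ne_zero) ?_
  rw [two_smul]; exact h

/- ## Structure identities -/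
section Struct
variable (X Y Z W : Derivation ℝ C C) (f : C)

/-- skew-symmetry relation -/
lemma skew : K.g (K.φ X) Y + K.g X (K.φ Y)
    = K.η X * K.η (K.φ Y) + K.η Y * K.η (K.φ X) := by
  have h := K.compat_phi X (K.φ Y)
  rw [K.phi_phi Y, K.g_add_right, K.g_neg_right, K.g_smul_right] at h
  simp only [K.eta_def] at h ⊢
  linear_combination -h

lemma eta_phi_phi : K.η (K.φ (K.φ X)) = 0 := by
  rw [K.phi_phi, K.eta_add, K.eta_neg, K.eta_smul, K.eta_xi, mul_one, neg_add_cancel]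

lemma etaphi_mul_etaphi : K.η (K.φ X) * K.η (K.φ Y) = 0 := by
  have h := K.skew (K.φ X) Y
  rw [K.eta_phi_phi X, K.phi_phi X, K.g_add_left, K.g_neg_left, K.g_smul_left] at h
  have h2 := K.compat_phi X Y
  simp only [K.eta_def] at h h2 ⊢
  rw [K.g_symm K.ξ Y] at h
  linear_combination h2 - h

lemma g_phi_xi : K.g (K.φ K.ξ) Z = K.η (K.φ K.ξ) * K.η Z := by
  have hZ : Z = K.η Z • K.ξ - K.φ (K.φ Z) := by rw [K.phi_phi Z]; abel
  have c1 : K.g (K.φ K.ξ) (K.φ (K.φ Z)) = 0 := by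
    rw [K.compat_phi, K.eta_xi, one_mul, K.g_symm, K.eta_def, sub_self]
  conv_lhs => rw [hZ]
  rw [K.g_sub_right, K.g_smul_right, c1, K.eta_def (K.φ K.ξ)]
  ring

/-- `φξ = η(φξ) • ξ` -/
lemma phi_xi_eq : K.φ K.ξ = K.η (K.φ K.ξ) • K.ξ := by
  have key : ∀ Z, K.g (K.φ K.ξ - K.η (K.φ K.ξ) • K.ξ) Z = 0 := by
    intro Z
    rw [K.g_sub_left, K.g_smul_left, K.g_phi_xi, K.eta_def Z, K.g_symm K.ξ Z]
    ring
  exact sub_eq_zero.mp (K.g_nondeg _ key)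

lemma eta_nabla_xi : K.η (K.nabla X K.ξ) = 0 := by
  have h := K.metric_compat X K.ξ K.ξ
  rw [K.g_xi_xi, Derivation.map_one_eq_zero, K.g_symm K.ξ (K.nabla X K.ξ)] at h
  rw [K.eta_def]
  exact half_cancel h.symm

lemma a_sq : K.η (K.φ K.ξ) * K.η (K.φ K.ξ) = 0 := K.etaphi_mul_etaphi K.ξ K.ξ

lemma a_k : K.η (K.φ K.ξ) * K.η (K.φ X) = 0 := K.etaphi_mul_etaphi K.ξ X

lemma a_Xa : K.η (K.φ K.ξ) * X (K.η (K.φ K.ξ)) = 0 := by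
  have h := congrArg X K.a_sq
  rw [Derivation.leibniz, map_zero, smul_eq_mul] at h
  exact half_cancel h

/-- the fundamental `E1` identity: `φ(∇_X ξ)` -/
lemma phi_nabla_xi : K.φ (K.nabla X K.ξ) =
    X (K.η (K.φ K.ξ)) • K.ξ + K.η (K.φ K.ξ) • K.nabla X K.ξ
      - K.g (K.φ X) K.ξ • K.ξ + K.φ X := by
  have ken := K.kenmotsu X K.ξ
  rw [K.eta_xi, one_smul] at ken
  rw [K.phi_xi_eq, K.nabla_leibniz] at ken
  linear_combination (norm := module) -ken

/-- raw formula for `∇_X ξ` -/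
lemma nabla_xi_raw : K.nabla X K.ξ
    = X - K.η X • K.ξ - K.η (K.φ K.ξ) • K.φ X := by
  set a := K.η (K.φ K.ξ) with ha
  have hphixi : K.φ K.ξ = a • K.ξ := by rw [ha]; exact K.phi_xi_eq
  have haa : a * a = 0 := by rw [ha]; exact K.a_sq
  have haXa : a * X a = 0 := by rw [ha]; exact K.a_Xa X
  have hak : a * K.g (K.φ X) K.ξ = 0 := by
    rw [← K.eta_def, ha]; exact K.a_k X
  have E1 := K.phi_nabla_xi X
  rw [← ha] at E1
  have E2 := congrArg K.φ E1
  rw [K.phi_add, K.phi_sub, K.phi_add, K.phi_smul, K.phi_smul, K.phi_smul,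
    K.phi_phi (K.nabla X K.ξ), K.eta_nabla_xi, zero_smul, add_zero,
    hphixi, K.phi_phi X, E1] at E2
  refine sub_eq_zero.mp (K.g_nondeg _ (fun W => ?_))
  have E2' := congrArg (fun V => K.g V W) E2
  simp only [K.g_add_left, K.g_sub_left, K.g_neg_left, K.g_smul_left] at E2'
  simp only [K.g_sub_left, K.g_smul_left]
  linear_combination -E2' - 2 * K.g K.ξ W * haXa - K.g (K.nabla X K.ξ) W * haa
    + 2 * K.g K.ξ W * hak

lemma X_eta_raw : X (K.η Y) = K.η (K.nabla X Y) + K.g X Y - K.η X * K.η Y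
    - K.η (K.φ K.ξ) * K.g (K.φ X) Y := by
  have h := K.metric_compat X Y K.ξ
  rw [K.nabla_xi_raw, K.g_sub_right, K.g_sub_right, K.g_smul_right, K.g_smul_right] at h
  rw [K.eta_def Y, K.eta_def (K.nabla X Y)]
  rw [K.g_symm X Y, K.g_symm (K.φ X) Y]
  linear_combination h

lemma Xa_eq : X (K.η (K.φ K.ξ)) = K.η (K.φ X) - K.η (K.φ K.ξ) * K.η X := by
  set a := K.η (K.φ K.ξ) with ha
  -- pair `phi_nabla_xi` with ξ
  have E1 := K.phi_nabla_xi X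
  rw [← ha] at E1
  have w1 := congrArg (fun V => K.g V K.ξ) E1
  simp only [K.g_add_left, K.g_sub_left, K.g_smul_left] at w1
  -- pair the direct computation with ξ
  have E3 := congrArg K.φ (K.nabla_xi_raw X)
  rw [← ha, K.phi_sub, K.phi_sub, K.phi_smul, K.phi_smul] at E3
  have w2 := congrArg (fun V => K.g V K.ξ) E3
  simp only [K.g_sub_left, K.g_smul_left] at w2
  -- identify the eta-terms
  have e1 : K.g (K.nabla X K.ξ) K.ξ = 0 := by
    rw [← K.eta_def]; exact K.eta_nabla_xi X
  have e2 : K.g (K.φ (K.φ X)) K.ξ = 0 := by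
    rw [← K.eta_def]; exact K.eta_phi_phi X
  have hpx : K.g (K.φ K.ξ) K.ξ = a := by rw [← K.eta_def, ← ha]
  rw [e1, K.g_xi_xi] at w1
  rw [e2, hpx] at w2
  rw [K.eta_def (K.φ X)]
  linear_combination w2 - w1

lemma X_k : X (K.η (K.φ Y)) = K.η (K.φ (K.nabla X Y))
    - K.η (K.φ K.ξ) * K.g X Y + K.η (K.φ K.ξ) * (K.η X * K.η Y) := by
  set a := K.η (K.φ K.ξ) with ha
  have h := K.X_eta_raw X (K.φ Y)
  -- η(∇_X(φY)) via kenmotsu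
  have ken := K.kenmotsu X Y
  have e1 := congrArg K.η ken
  rw [K.eta_sub, K.eta_sub, K.eta_smul, K.eta_smul, K.eta_xi, mul_one] at e1
  -- a * g(φX, φY) via compat
  have e2 := K.compat_phi X Y
  -- skew for g(X, φY)
  have e3 := K.skew X Y
  have haa : a * a = 0 := by rw [ha]; exact K.a_sq
  have hak : a * K.η (K.φ X) = 0 := by rw [ha]; exact K.a_k X
  rw [← ha] at h
  linear_combination h + e1 + e3 - a * e2

lemma eta_bracket : K.η ⁅X, Y⁆ = K.η (K.nabla X Y) - K.η (K.nabla Y X) := by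
  rw [← K.torsion_free, K.eta_sub]

lemma k_bracket : K.η (K.φ ⁅X, Y⁆)
    = K.η (K.φ (K.nabla X Y)) - K.η (K.φ (K.nabla Y X)) := by
  rw [← K.torsion_free, K.phi_sub, K.eta_sub]

/-- key identity: `η(φX) = η(φξ) η(X)` -/
lemma k_eq : K.η (K.φ X) = K.η (K.φ K.ξ) * K.η X := by
  set a := K.η (K.φ K.ξ) with ha
  -- symmetric relation from the cocycle identity for the bracket
  have key : ∀ Z W : Derivation ℝ C C, K.η (K.φ Z) * K.η W = K.η (K.φ W) * K.η Z := by
    intro Z W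
    have hc : ⁅Z, W⁆ (K.η (K.φ K.ξ)) = Z (W (K.η (K.φ K.ξ))) - W (Z (K.η (K.φ K.ξ))) :=
      Derivation.commutator_apply _
    rw [K.Xa_eq, K.Xa_eq, K.Xa_eq] at hc
    rw [← ha] at hc
    -- expand Z (η(φW) − a ηW) etc.
    rw [map_sub, map_sub, K.X_k Z W, K.X_k W Z] at hc
    rw [Derivation.leibniz Z a (K.η W), Derivation.leibniz W a (K.η Z)] at hc
    rw [← ha] at hc
    rw [K.X_eta_raw Z W, K.X_eta_raw W Z] at hc
    rw [K.k_bracket, K.eta_bracket] at hc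
    have haa : a * a = 0 := by rw [ha]; exact K.a_sq
    have hZa : Z a = K.η (K.φ Z) - a * K.η Z := by rw [ha]; exact K.Xa_eq Z
    have hWa : W a = K.η (K.φ W) - a * K.η W := by rw [ha]; exact K.Xa_eq W
    have hgs : K.g Z W = K.g W Z := K.g_symm Z W
    simp only [smul_eq_mul] at hc
    linear_combination hc - K.η W * hZa + K.η Z * hWa - 2*a*hgs
      + (K.g (K.φ Z) W - K.g (K.φ W) Z) * haa
  have h := key X K.ξ
  rw [K.eta_xi, mul_one] at h
  rw [h, ha, mul_comm]

lemma Xa_zero : X (K.η (K.φ K.ξ)) = 0 := by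
  rw [K.Xa_eq, K.k_eq, sub_self]

/-- `a g(X,Y) = a η(X)η(Y)` -/
lemma two_a : K.η (K.φ K.ξ) * K.g X Y = K.η (K.φ K.ξ) * (K.η X * K.η Y) := by
  set a := K.η (K.φ K.ξ) with ha
  have h := K.X_k X Y
  rw [← ha] at h
  rw [show K.η (K.φ Y) = a * K.η Y by rw [ha]; exact K.k_eq Y] at h
  rw [show K.η (K.φ (K.nabla X Y)) = a * K.η (K.nabla X Y) by
    rw [ha]; exact K.k_eq _] at h
  rw [Derivation.leibniz, smul_eq_mul, smul_eq_mul,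
    show X a = 0 by rw [ha]; exact K.Xa_zero X, mul_zero, add_zero] at h
  have h2 := K.X_eta_raw X Y
  rw [← ha] at h2
  have haa : a * a = 0 := by rw [ha]; exact K.a_sq
  have key : (a * K.g X Y - a * (K.η X * K.η Y))
      + (a * K.g X Y - a * (K.η X * K.η Y)) = 0 := by
    linear_combination h - a * h2 + K.g (K.φ X) Y * haa
  linear_combination half_cancel key

lemma a_zero (hn : n ≠ 0) : K.η (K.φ K.ξ) = 0 := by
  set a := K.η (K.φ K.ξ) with ha
  have hsum : a * (∑ i, K.g (K.e i) (K.e i))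
      = a * ∑ i, (K.η (K.e i) * K.η (K.e i)) := by
    rw [Finset.mul_sum, Finset.mul_sum]
    exact Finset.sum_congr rfl fun i _ => by rw [ha]; exact K.two_a _ _
  rw [K.sum_eta_sq, mul_one] at hsum
  have hdiag : ∑ i : Fin (2*n+1), K.g (K.e i) (K.e i) = ((2*n+1 : ℕ) : C) := by
    rw [Finset.sum_congr rfl fun i (_ : i ∈ Finset.univ) => by
      rw [K.g_frame, if_pos rfl]]
    rw [Finset.sum_const, Finset.card_univ, Fintype.card_fin, nsmul_eq_mul, mul_one]
  rw [hdiag] at hsum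
  have h2 : ((2*n : ℕ) : C) * a = 0 := by push_cast at hsum ⊢; linear_combination hsum
  have h3 : ((2*n : ℕ) : ℝ) • a = 0 := by
    rw [Algebra.smul_def, map_natCast]; exact h2
  exact real_smul_cancel (Nat.cast_ne_zero.mpr (by omega)) h3

/- ## clean identities (assuming `η(φξ) = 0`) -/

lemma phi_xi (h0 : K.η (K.φ K.ξ) = 0) : K.φ K.ξ = 0 := by
  rw [K.phi_xi_eq, h0, zero_smul]

lemma eta_phi (h0 : K.η (K.φ K.ξ) = 0) : K.η (K.φ X) = 0 := by
  rw [K.k_eq, h0, zero_mul]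

lemma nabla_xi (h0 : K.η (K.φ K.ξ) = 0) : K.nabla X K.ξ = X - K.η X • K.ξ := by
  rw [K.nabla_xi_raw, h0, zero_smul, sub_zero]

lemma X_eta (h0 : K.η (K.φ K.ξ) = 0) :
    X (K.η Y) = K.η (K.nabla X Y) + K.g X Y - K.η X * K.η Y := by
  rw [K.X_eta_raw, h0, zero_mul, sub_zero]

end Struct

section Curv
variable (X Y Z W V : Derivation ℝ C C) (f : C)

lemma jacobi' : ⁅X, ⁅Y, Z⁆⁆ + ⁅Y, ⁅Z, X⁆⁆ + ⁅Z, ⁅X, Y⁆⁆ = 0 := by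
  ext a
  simp only [Derivation.commutator_apply, Derivation.add_apply, Derivation.zero_apply, map_sub]
  ring

lemma Rm_swap : K.Rm X Y Z = -K.Rm Y X Z := by
  unfold Rm
  rw [show ⁅Y, X⁆ = -⁅X, Y⁆ by rw [← lie_skew], K.nabla_neg_left]
  abel

lemma Rm_add_left : K.Rm (X + W) Y Z = K.Rm X Y Z + K.Rm W Y Z := by
  unfold Rm
  rw [K.nabla_add_left, K.nabla_add_left, K.nabla_add_right, add_lie, K.nabla_add_left]
  abel

lemma Rm_smul_left : K.Rm (f • X) Y Z = f • K.Rm X Y Z := by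
  unfold Rm
  rw [K.nabla_smul_left, K.nabla_smul_left, K.nabla_leibniz, bracket_smul_left,
    K.nabla_sub_left, K.nabla_smul_left, K.nabla_smul_left]
  module

lemma Rm_add_right : K.Rm X Y (Z + W) = K.Rm X Y Z + K.Rm X Y W := by
  unfold Rm
  rw [K.nabla_add_right, K.nabla_add_right, K.nabla_add_right, K.nabla_add_right,
    K.nabla_add_right]
  abel

lemma Rm_smul_right : K.Rm X Y (f • Z) = f • K.Rm X Y Z := by
  unfold Rm
  rw [K.nabla_leibniz Y f Z, K.nabla_add_right, K.nabla_leibniz, K.nabla_leibniz,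
    K.nabla_leibniz X f Z, K.nabla_add_right, K.nabla_leibniz, K.nabla_leibniz,
    K.nabla_leibniz, Derivation.commutator_apply]
  module

lemma Rm_sub_right : K.Rm X Y (Z - W) = K.Rm X Y Z - K.Rm X Y W := by
  rw [sub_eq_add_neg, K.Rm_add_right, ← neg_one_smul C W, K.Rm_smul_right,
    neg_one_smul, sub_eq_add_neg]

lemma bianchi1 : K.Rm X Y Z + K.Rm Y Z X + K.Rm Z X Y = 0 := by
  have cX : K.nabla X (K.nabla Y Z) - K.nabla X (K.nabla Z Y) = K.nabla X ⁅Y, Z⁆ := by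
    rw [← K.nabla_sub_right, K.torsion_free]
  have cY : K.nabla Y (K.nabla Z X) - K.nabla Y (K.nabla X Z) = K.nabla Y ⁅Z, X⁆ := by
    rw [← K.nabla_sub_right, K.torsion_free]
  have cZ : K.nabla Z (K.nabla X Y) - K.nabla Z (K.nabla Y X) = K.nabla Z ⁅X, Y⁆ := by
    rw [← K.nabla_sub_right, K.torsion_free]
  have dX := K.torsion_free X ⁅Y, Z⁆
  have dY := K.torsion_free Y ⁅Z, X⁆
  have dZ := K.torsion_free Z ⁅X, Y⁆
  have jac := jacobi' X Y Z
  unfold Rm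
  linear_combination (norm := module) cX + cY + cZ + dX + dY + dZ + jac

lemma g_Rm_self : K.g (K.Rm X Y Z) Z = 0 := by
  have h1 := K.metric_compat X (K.nabla Y Z) Z
  have h2 := K.metric_compat Y (K.nabla X Z) Z
  have h5 := K.metric_compat ⁅X, Y⁆ Z Z
  rw [K.g_symm Z (K.nabla ⁅X, Y⁆ Z)] at h5
  have h3 := congrArg X (K.metric_compat Y Z Z)
  rw [K.g_symm Z (K.nabla Y Z), map_add] at h3
  have h4 := congrArg Y (K.metric_compat X Z Z)
  rw [K.g_symm Z (K.nabla X Z), map_add] at h4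
  have hc : ⁅X, Y⁆ (K.g Z Z) = X (Y (K.g Z Z)) - Y (X (K.g Z Z)) :=
    Derivation.commutator_apply _
  have hp : K.g (K.nabla Y Z) (K.nabla X Z) = K.g (K.nabla X Z) (K.nabla Y Z) :=
    K.g_symm _ _
  have key : K.g (K.Rm X Y Z) Z + K.g (K.Rm X Y Z) Z = 0 := by
    unfold Rm
    rw [K.g_sub_left, K.g_sub_left]
    linear_combination -2 * h1 + 2 * h2 + h5 - hc - h3 + h4 - 2 * hp
  exact half_cancel key

lemma g_Rm_antisym : K.g (K.Rm X Y Z) W = -K.g (K.Rm X Y W) Z := by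
  have h := K.g_Rm_self X Y (Z + W)
  rw [K.Rm_add_right, K.g_add_left, K.g_add_right, K.g_add_right,
    K.g_Rm_self, K.g_Rm_self] at h
  linear_combination h

lemma g_Rm_swap : K.g (K.Rm X Y Z) W = -K.g (K.Rm Y X Z) W := by
  rw [K.Rm_swap, K.g_neg_left]

lemma g_Rm_both : K.g (K.Rm X Y Z) W = K.g (K.Rm Y X W) Z := by
  rw [K.g_Rm_antisym, K.g_Rm_swap]; ring

/-- pair symmetry -/
lemma g_Rm_pair : K.g (K.Rm X Y Z) W = K.g (K.Rm Z W X) Y := by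
  have pair : ∀ A B D : Derivation ℝ C C,
      K.g (K.Rm A B D) D = 0 → True := fun _ _ _ _ => trivial
  have gb : ∀ A B D E : Derivation ℝ C C,
      K.g (K.Rm A B D) E + K.g (K.Rm B D A) E + K.g (K.Rm D A B) E = 0 := by
    intro A B D E
    have h := congrArg (fun V => K.g V E) (K.bianchi1 A B D)
    simpa only [K.g_add_left, K.g_zero_left] using h
  have b1 := gb X Y Z W
  have b2 := gb Y Z W X
  have b3 := gb Z W X Y
  have b4 := gb W X Y Z
  have a1 := K.g_Rm_antisym Y Z X W
  have a2 := K.g_Rm_antisym X Y W Z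
  have a3 := K.g_Rm_antisym Z W Y X
  have a4 := K.g_Rm_both X Z W Y
  have a5 := K.g_Rm_both Y W X Z
  have a6 := K.g_Rm_antisym W X Z Y
  have key : (K.g (K.Rm X Y Z) W - K.g (K.Rm Z W X) Y)
      + (K.g (K.Rm X Y Z) W - K.g (K.Rm Z W X) Y) = 0 := by
    linear_combination b1 + b2 - b3 - b4 - a1 + a2 - a3 + a4 + a5 + a6
  linear_combination half_cancel key

lemma Rm_xi (h0 : K.η (K.φ K.ξ) = 0) :
    K.Rm X Y K.ξ = K.η X • Y - K.η Y • X := by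
  have e1 : K.nabla X (K.nabla Y K.ξ)
      = K.nabla X Y - X (K.η Y) • K.ξ - K.η Y • (X - K.η X • K.ξ) := by
    rw [K.nabla_xi Y h0, K.nabla_sub_right, K.nabla_leibniz, K.nabla_xi X h0]; module
  have e2 : K.nabla Y (K.nabla X K.ξ)
      = K.nabla Y X - Y (K.η X) • K.ξ - K.η X • (Y - K.η Y • K.ξ) := by
    rw [K.nabla_xi X h0, K.nabla_sub_right, K.nabla_leibniz, K.nabla_xi Y h0]; module
  have e3 : K.nabla ⁅X, Y⁆ K.ξ = ⁅X, Y⁆ - K.η ⁅X, Y⁆ • K.ξ := K.nabla_xi ⁅X, Y⁆ h0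
  have h1 := congrArg (fun c : C => c • K.ξ) (K.X_eta X Y h0)
  have h2 := congrArg (fun c : C => c • K.ξ) (K.X_eta Y X h0)
  have hb := congrArg (fun c : C => c • K.ξ) (K.eta_bracket X Y)
  have hgs := congrArg (fun c : C => c • K.ξ) (K.g_symm X Y)
  have hXY := K.torsion_free X Y
  unfold Rm
  rw [e1, e2, e3]
  linear_combination (norm := module) -h1 + h2 + hb - hgs + hXY

/-- the covariant derivative of the curvature tensor -/
def DR (Z X Y W : Derivation ℝ C C) : Derivation ℝ C C :=
  K.nabla Z (K.Rm X Y W) - K.Rm (K.nabla Z X) Y W - K.Rm X (K.nabla Z Y) W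
    - K.Rm X Y (K.nabla Z W)

lemma DR_xi (h0 : K.η (K.φ K.ξ) = 0) :
    K.DR Z X Y K.ξ = K.g Z X • Y - K.g Z Y • X - K.Rm X Y Z := by
  unfold DR
  have e0 : K.nabla Z (K.Rm X Y K.ξ)
      = Z (K.η X) • Y + K.η X • K.nabla Z Y - (Z (K.η Y) • X + K.η Y • K.nabla Z X) := by
    rw [K.Rm_xi X Y h0, K.nabla_sub_right, K.nabla_leibniz, K.nabla_leibniz]
  rw [e0, K.Rm_xi (K.nabla Z X) Y h0, K.Rm_xi X (K.nabla Z Y) h0,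
    K.nabla_xi Z h0, K.Rm_sub_right, K.Rm_smul_right, K.Rm_xi X Y h0]
  have h1 := congrArg (fun c : C => c • Y) (K.X_eta Z X h0)
  have h2 := congrArg (fun c : C => c • X) (K.X_eta Z Y h0)
  linear_combination (norm := module) h1 - h2

lemma g_DR_expand : K.g (K.DR Z X Y V) W
    = Z (K.g (K.Rm X Y V) W) - K.g (K.Rm X Y V) (K.nabla Z W)
      - K.g (K.Rm (K.nabla Z X) Y V) W - K.g (K.Rm X (K.nabla Z Y) V) W
      - K.g (K.Rm X Y (K.nabla Z V)) W := by
  unfold DR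
  rw [K.g_sub_left, K.g_sub_left, K.g_sub_left]
  linear_combination -K.metric_compat Z (K.Rm X Y V) W

lemma g_DR_antisym : K.g (K.DR Z X Y V) W = -K.g (K.DR Z X Y W) V := by
  rw [K.g_DR_expand, K.g_DR_expand]
  have t0 := congrArg (fun c : C => Z c) (K.g_Rm_antisym X Y V W)
  simp only [map_neg] at t0
  have a1 := K.g_Rm_antisym X Y V (K.nabla Z W)
  have a2 := K.g_Rm_antisym (K.nabla Z X) Y V W
  have a3 := K.g_Rm_antisym X (K.nabla Z Y) V W
  have a4 := K.g_Rm_antisym X Y (K.nabla Z V) W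
  linear_combination t0 - a1 - a2 - a3 - a4

lemma g_DR_swap12 : K.g (K.DR Z X Y V) W = -K.g (K.DR Z Y X V) W := by
  rw [K.g_DR_expand, K.g_DR_expand]
  have t0 := congrArg (fun c : C => Z c) (K.g_Rm_swap X Y V W)
  simp only [map_neg] at t0
  have a1 := K.g_Rm_swap X Y V (K.nabla Z W)
  have a2 := K.g_Rm_swap (K.nabla Z X) Y V W
  have a3 := K.g_Rm_swap X (K.nabla Z Y) V W
  have a4 := K.g_Rm_swap X Y (K.nabla Z V) W
  linear_combination t0 - a1 - a2 - a3 - a4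

lemma g_DR_pair : K.g (K.DR Z X Y V) W = K.g (K.DR Z V W X) Y := by
  rw [K.g_DR_expand, K.g_DR_expand]
  have t0 := congrArg (fun c : C => Z c) (K.g_Rm_pair X Y V W)
  have a1 := K.g_Rm_pair X Y V (K.nabla Z W)
  have a2 := K.g_Rm_pair (K.nabla Z X) Y V W
  have a3 := K.g_Rm_pair X (K.nabla Z Y) V W
  have a4 := K.g_Rm_pair X Y (K.nabla Z V) W
  linear_combination t0 - a1 - a2 - a3 - a4

lemma Rm_sub_left : K.Rm (X - W) Y Z = K.Rm X Y Z - K.Rm W Y Z := by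
  rw [sub_eq_add_neg, K.Rm_add_left, ← neg_one_smul C W, K.Rm_smul_left, neg_one_smul,
    sub_eq_add_neg]

/-- second Bianchi identity -/
lemma bianchi2 : K.DR X Y Z W + K.DR Y Z X W + K.DR Z X Y W = 0 := by
  have qX : K.nabla X (K.Rm Y Z W) = K.nabla X (K.nabla Y (K.nabla Z W))
      - K.nabla X (K.nabla Z (K.nabla Y W)) - K.nabla X (K.nabla ⁅Y, Z⁆ W) := by
    unfold Rm; rw [K.nabla_sub_right, K.nabla_sub_right]
  have qY : K.nabla Y (K.Rm Z X W) = K.nabla Y (K.nabla Z (K.nabla X W))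
      - K.nabla Y (K.nabla X (K.nabla Z W)) - K.nabla Y (K.nabla ⁅Z, X⁆ W) := by
    unfold Rm; rw [K.nabla_sub_right, K.nabla_sub_right]
  have qZ : K.nabla Z (K.Rm X Y W) = K.nabla Z (K.nabla X (K.nabla Y W))
      - K.nabla Z (K.nabla Y (K.nabla X W)) - K.nabla Z (K.nabla ⁅X, Y⁆ W) := by
    unfold Rm; rw [K.nabla_sub_right, K.nabla_sub_right]
  have uX : K.Rm Y Z (K.nabla X W) = K.nabla Y (K.nabla Z (K.nabla X W))
      - K.nabla Z (K.nabla Y (K.nabla X W)) - K.nabla ⁅Y, Z⁆ (K.nabla X W) := rfl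
  have uY : K.Rm Z X (K.nabla Y W) = K.nabla Z (K.nabla X (K.nabla Y W))
      - K.nabla X (K.nabla Z (K.nabla Y W)) - K.nabla ⁅Z, X⁆ (K.nabla Y W) := rfl
  have uZ : K.Rm X Y (K.nabla Z W) = K.nabla X (K.nabla Y (K.nabla Z W))
      - K.nabla Y (K.nabla X (K.nabla Z W)) - K.nabla ⁅X, Y⁆ (K.nabla Z W) := rfl
  have p1 : K.Rm (K.nabla X Y) Z W + K.Rm Z (K.nabla Y X) W = K.Rm ⁅X, Y⁆ Z W := by
    rw [← K.torsion_free, K.Rm_sub_left, K.Rm_swap Z (K.nabla Y X) W]; abel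
  have p2 : K.Rm (K.nabla Y Z) X W + K.Rm X (K.nabla Z Y) W = K.Rm ⁅Y, Z⁆ X W := by
    rw [← K.torsion_free, K.Rm_sub_left, K.Rm_swap X (K.nabla Z Y) W]; abel
  have p3 : K.Rm (K.nabla Z X) Y W + K.Rm Y (K.nabla X Z) W = K.Rm ⁅Z, X⁆ Y W := by
    rw [← K.torsion_free, K.Rm_sub_left, K.Rm_swap Y (K.nabla X Z) W]; abel
  have b1 : K.Rm ⁅X, Y⁆ Z W = K.nabla ⁅X, Y⁆ (K.nabla Z W)
      - K.nabla Z (K.nabla ⁅X, Y⁆ W) - K.nabla ⁅⁅X, Y⁆, Z⁆ W := rfl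
  have b2 : K.Rm ⁅Y, Z⁆ X W = K.nabla ⁅Y, Z⁆ (K.nabla X W)
      - K.nabla X (K.nabla ⁅Y, Z⁆ W) - K.nabla ⁅⁅Y, Z⁆, X⁆ W := rfl
  have b3 : K.Rm ⁅Z, X⁆ Y W = K.nabla ⁅Z, X⁆ (K.nabla Y W)
      - K.nabla Y (K.nabla ⁅Z, X⁆ W) - K.nabla ⁅⁅Z, X⁆, Y⁆ W := rfl
  have nb1 : K.nabla ⁅⁅X, Y⁆, Z⁆ W = -K.nabla ⁅Z, ⁅X, Y⁆⁆ W := by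
    rw [show ⁅⁅X, Y⁆, Z⁆ = -⁅Z, ⁅X, Y⁆⁆ by rw [← lie_skew], K.nabla_neg_left]
  have nb2 : K.nabla ⁅⁅Y, Z⁆, X⁆ W = -K.nabla ⁅X, ⁅Y, Z⁆⁆ W := by
    rw [show ⁅⁅Y, Z⁆, X⁆ = -⁅X, ⁅Y, Z⁆⁆ by rw [← lie_skew], K.nabla_neg_left]
  have nb3 : K.nabla ⁅⁅Z, X⁆, Y⁆ W = -K.nabla ⁅Y, ⁅Z, X⁆⁆ W := by
    rw [show ⁅⁅Z, X⁆, Y⁆ = -⁅Y, ⁅Z, X⁆⁆ by rw [← lie_skew], K.nabla_neg_left]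
  have jacn : K.nabla ⁅X, ⁅Y, Z⁆⁆ W + K.nabla ⁅Y, ⁅Z, X⁆⁆ W + K.nabla ⁅Z, ⁅X, Y⁆⁆ W = 0 := by
    rw [← K.nabla_add_left, ← K.nabla_add_left, jacobi' X Y Z, K.nabla_zero_left]
  unfold DR
  linear_combination (norm := module) qX + qY + qZ - uX - uY - uZ - p1 - p2 - p3
    - b1 - b2 - b3 + nb1 + nb2 + nb3 - jacn

end Curv

section Trace

lemma sum_antisym_zero {N : ℕ} (c M : Fin N → Fin N → C)
    (hc : ∀ i j, c i j = -c j i) (hM : ∀ i j, M i j = M j i) :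
    ∑ i, ∑ j, c i j * M i j = 0 := by
  have h : ∑ i, ∑ j, c i j * M i j = -∑ i, ∑ j, c i j * M i j := by
    conv_lhs => rw [Finset.sum_comm]
    rw [← Finset.sum_neg_distrib]
    refine Finset.sum_congr rfl fun i _ => ?_
    rw [← Finset.sum_neg_distrib]
    refine Finset.sum_congr rfl fun j _ => ?_
    rw [hc j i, hM j i]; ring
  refine half_cancel ?_
  linear_combination h

variable (X Y Z W : Derivation ℝ C C) (f : C)

lemma Rm_add_mid : K.Rm X (Y + W) Z = K.Rm X Y Z + K.Rm X W Z := by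
  rw [K.Rm_swap, K.Rm_add_left, K.Rm_swap Y X Z, K.Rm_swap W X Z]; abel

lemma Rm_smul_mid : K.Rm X (f • Y) Z = f • K.Rm X Y Z := by
  rw [K.Rm_swap, K.Rm_smul_left, K.Rm_swap Y X Z]; module

lemma Rm_zero_left : K.Rm 0 Y Z = 0 := by
  have h := K.Rm_add_left 0 Y Z 0
  rw [add_zero] at h
  linear_combination (norm := module) -h

lemma Rm_sum_left {ι : Type*} (s : Finset ι) (F : ι → Derivation ℝ C C) :
    K.Rm (∑ i ∈ s, F i) Y Z = ∑ i ∈ s, K.Rm (F i) Y Z := by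
  classical
  induction s using Finset.induction_on with
  | empty => simpa using K.Rm_zero_left Y Z
  | @insert a s h ih => rw [Finset.sum_insert h, Finset.sum_insert h, K.Rm_add_left, ih]

lemma S_symm : K.S X Y = K.S Y X := by
  unfold S
  refine Finset.sum_congr rfl fun i _ => ?_
  rw [K.g_Rm_pair, K.g_Rm_both]

lemma S_add_left : K.S (X + W) Y = K.S X Y + K.S W Y := by
  unfold S
  rw [← Finset.sum_add_distrib]
  exact Finset.sum_congr rfl fun i _ => by rw [K.Rm_add_mid, K.g_add_left]

lemma S_smul_left : K.S (f • X) Y = f * K.S X Y := by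
  unfold S
  rw [Finset.mul_sum]
  exact Finset.sum_congr rfl fun i _ => by rw [K.Rm_smul_mid, K.g_smul_left]

lemma S_zero_left : K.S 0 Y = 0 := by
  have h := K.S_add_left 0 Y 0
  rw [add_zero] at h
  linear_combination -h

lemma S_sum_left {ι : Type*} (s : Finset ι) (F : ι → Derivation ℝ C C) :
    K.S (∑ i ∈ s, F i) Y = ∑ i ∈ s, K.S (F i) Y := by
  classical
  induction s using Finset.induction_on with
  | empty => simpa using K.S_zero_left Y
  | @insert a s h ih => rw [Finset.sum_insert h, Finset.sum_insert h, K.S_add_left, ih]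

/-- frame coefficients of `∇_Z e i` are antisymmetric -/
lemma conn_antisym (i j : Fin (2*n+1)) :
    K.g (K.nabla Z (K.e i)) (K.e j) = -K.g (K.nabla Z (K.e j)) (K.e i) := by
  have h := K.metric_compat Z (K.e i) (K.e j)
  rw [K.deriv_g_frame Z i j, K.g_symm (K.e i) (K.nabla Z (K.e j))] at h
  linear_combination -h

/-- covariant derivative of the Ricci tensor as a trace of `DR` -/
lemma DS_eq : Z (K.S X Y) - K.S (K.nabla Z X) Y - K.S X (K.nabla Z Y)
    = ∑ i, K.g (K.DR Z (K.e i) X Y) (K.e i) := by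
  unfold S
  rw [map_sum]
  have key : ∀ i, Z (K.g (K.Rm (K.e i) X Y) (K.e i))
      = K.g (K.DR Z (K.e i) X Y) (K.e i)
        + K.g (K.Rm (K.e i) (K.nabla Z X) Y) (K.e i)
        + K.g (K.Rm (K.e i) X (K.nabla Z Y)) (K.e i)
        + (K.g (K.Rm (K.nabla Z (K.e i)) X Y) (K.e i)
           + K.g (K.Rm (K.e i) X Y) (K.nabla Z (K.e i))) := by
    intro i
    have h := K.metric_compat Z (K.Rm (K.e i) X Y) (K.e i)
    unfold DR
    rw [K.g_sub_left, K.g_sub_left, K.g_sub_left]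
    linear_combination h
  rw [Finset.sum_congr rfl fun i _ => key i]
  rw [Finset.sum_add_distrib, Finset.sum_add_distrib, Finset.sum_add_distrib]
  have hzero : ∑ i, (K.g (K.Rm (K.nabla Z (K.e i)) X Y) (K.e i)
      + K.g (K.Rm (K.e i) X Y) (K.nabla Z (K.e i))) = 0 := by
    have expand : ∀ i, K.g (K.Rm (K.nabla Z (K.e i)) X Y) (K.e i)
        + K.g (K.Rm (K.e i) X Y) (K.nabla Z (K.e i))
        = ∑ j, K.g (K.nabla Z (K.e i)) (K.e j)
            * (K.g (K.Rm (K.e j) X Y) (K.e i) + K.g (K.Rm (K.e i) X Y) (K.e j)) := by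
      intro i
      have e1 : K.Rm (K.nabla Z (K.e i)) X Y
          = ∑ j, K.g (K.nabla Z (K.e i)) (K.e j) • K.Rm (K.e j) X Y := by
        conv_lhs => rw [K.frame_span (K.nabla Z (K.e i))]
        rw [K.Rm_sum_left]
        exact Finset.sum_congr rfl fun j _ => K.Rm_smul_left _ _ _ _
      have e2 : K.g (K.Rm (K.e i) X Y) (K.nabla Z (K.e i))
          = ∑ j, K.g (K.nabla Z (K.e i)) (K.e j) * K.g (K.Rm (K.e i) X Y) (K.e j) := by
        conv_lhs => rw [K.frame_span (K.nabla Z (K.e i)), K.g_sum_right]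
        exact Finset.sum_congr rfl fun j _ => by
          rw [K.g_smul_right]
      rw [e1, K.g_sum_left, e2, ← Finset.sum_add_distrib]
      exact Finset.sum_congr rfl fun j _ => by rw [K.g_smul_left]; ring
    rw [Finset.sum_congr rfl fun i _ => expand i]
    exact sum_antisym_zero _ _ (fun i j => K.conn_antisym Z i j)
      (fun i j => by ring)
  rw [hzero]
  ring

lemma sum_diag : ∑ i : Fin (2*n+1), K.g (K.e i) (K.e i) = ((2*n+1 : ℕ) : C) := by
  rw [Finset.sum_congr rfl fun i (_ : i ∈ Finset.univ) => by
    rw [K.g_frame, if_pos rfl]]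
  rw [Finset.sum_const, Finset.card_univ, Fintype.card_fin, nsmul_eq_mul, mul_one]

lemma sum_gij_sq (j : Fin (2*n+1)) :
    ∑ i, K.g (K.e j) (K.e i) * K.g (K.e j) (K.e i) = 1 := by
  have h := K.g_expand (K.e j) (K.e j)
  rw [K.g_frame, if_pos rfl] at h
  exact h.symm

lemma Rm_self : K.Rm X X Z = 0 := by
  unfold Rm
  rw [lie_self, K.nabla_zero_left]
  abel

/-- the main identity -/
lemma xi_r (h0 : K.η (K.φ K.ξ) = 0) :
    K.ξ K.r = 2 * ((2*n+1 : ℕ) : C) - 2 * ((2*n+1 : ℕ) : C) * ((2*n+1 : ℕ) : C)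
      - 2 * K.r := by
  have step1 : ∀ j, K.ξ (K.S (K.e j) (K.e j))
      = (∑ i, K.g (K.DR K.ξ (K.e i) (K.e j) (K.e j)) (K.e i))
        + K.S (K.nabla K.ξ (K.e j)) (K.e j) + K.S (K.e j) (K.nabla K.ξ (K.e j)) := by
    intro j
    linear_combination K.DS_eq (K.e j) (K.e j) K.ξ
  have hzero : ∑ j, (K.S (K.nabla K.ξ (K.e j)) (K.e j)
      + K.S (K.e j) (K.nabla K.ξ (K.e j))) = 0 := by
    have expand : ∀ j, K.S (K.nabla K.ξ (K.e j)) (K.e j)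
        + K.S (K.e j) (K.nabla K.ξ (K.e j))
        = ∑ k, K.g (K.nabla K.ξ (K.e j)) (K.e k) * (2 * K.S (K.e k) (K.e j)) := by
      intro j
      have e1 : K.S (K.nabla K.ξ (K.e j)) (K.e j)
          = ∑ k, K.g (K.nabla K.ξ (K.e j)) (K.e k) * K.S (K.e k) (K.e j) := by
        conv_lhs => rw [K.frame_span (K.nabla K.ξ (K.e j))]
        rw [K.S_sum_left]
        exact Finset.sum_congr rfl fun k _ => K.S_smul_left _ _ _
      rw [K.S_symm (K.e j) (K.nabla K.ξ (K.e j)), e1, ← Finset.sum_add_distrib]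
      exact Finset.sum_congr rfl fun k _ => by ring
    rw [Finset.sum_congr rfl fun j _ => expand j]
    exact sum_antisym_zero _ _ (fun i j => K.conn_antisym K.ξ i j)
      (fun i j => by rw [K.S_symm (K.e j) (K.e i)])
  have key : ∀ j i, K.g (K.DR K.ξ (K.e i) (K.e j) (K.e j)) (K.e i)
      = 2 * (K.g (K.e j) (K.e i) * K.g (K.e j) (K.e i))
        - 2 * (K.g (K.e i) (K.e i) * K.g (K.e j) (K.e j))
        - 2 * K.g (K.Rm (K.e j) (K.e i) (K.e i)) (K.e j) := by
    intro j i
    have hb := congrArg (fun V => K.g V (K.e i)) (K.bianchi2 K.ξ (K.e i) (K.e j) (K.e j))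
    simp only [K.g_add_left, K.g_zero_left] at hb
    have t1 : K.g (K.DR (K.e i) (K.e j) K.ξ (K.e j)) (K.e i)
        = -(K.g (K.e i) (K.e j) * K.g (K.e i) (K.e j)
            - K.g (K.e i) (K.e i) * K.g (K.e j) (K.e j)
            - K.g (K.Rm (K.e j) (K.e i) (K.e i)) (K.e j)) := by
      rw [K.g_DR_pair, K.g_DR_antisym, K.DR_xi (K.e j) (K.e i) (K.e i) h0,
        K.g_sub_left, K.g_sub_left, K.g_smul_left, K.g_smul_left]
    have t2 : K.g (K.DR (K.e j) K.ξ (K.e i) (K.e j)) (K.e i)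
        = K.g (K.e j) (K.e j) * K.g (K.e i) (K.e i)
          - K.g (K.e j) (K.e i) * K.g (K.e j) (K.e i)
          - K.g (K.Rm (K.e j) (K.e i) (K.e j)) (K.e i) := by
      rw [K.g_DR_swap12, K.g_DR_pair, K.g_DR_antisym, K.DR_xi (K.e j) (K.e i) (K.e j) h0,
        K.g_sub_left, K.g_sub_left, K.g_smul_left, K.g_smul_left]
      ring
    have ha := K.g_Rm_antisym (K.e j) (K.e i) (K.e j) (K.e i)
    have hs1 := K.g_symm (K.e i) (K.e j)
    linear_combination hb - t1 - t2 + ha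
      + (K.g (K.e i) (K.e j) + K.g (K.e j) (K.e i)) * hs1
  have inner : ∀ j, ∑ i, K.g (K.DR K.ξ (K.e i) (K.e j) (K.e j)) (K.e i)
      = 2 - 2 * ((2*n+1 : ℕ) : C) * K.g (K.e j) (K.e j)
        - 2 * ∑ i, K.g (K.Rm (K.e j) (K.e i) (K.e i)) (K.e j) := by
    intro j
    rw [Finset.sum_congr rfl fun i _ => key j i]
    rw [Finset.sum_sub_distrib, Finset.sum_sub_distrib, ← Finset.mul_sum,
      K.sum_gij_sq j, ← Finset.mul_sum]
    have : ∑ i, K.g (K.e i) (K.e i) * K.g (K.e j) (K.e j)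
        = ((2*n+1 : ℕ) : C) * K.g (K.e j) (K.e j) := by
      rw [← Finset.sum_mul, K.sum_diag]
    rw [this, ← Finset.mul_sum]
    ring
  have swap : ∑ j, ∑ i, K.g (K.Rm (K.e j) (K.e i) (K.e i)) (K.e j) = K.r := by
    rw [Finset.sum_comm]
    rfl
  rw [Finset.sum_add_distrib] at hzero
  have final1 : ∑ j, (2 - 2 * ((2*n+1:ℕ):C) * K.g (K.e j) (K.e j)
      - 2 * ∑ i, K.g (K.Rm (K.e j) (K.e i) (K.e i)) (K.e j))
      = 2*((2*n+1:ℕ):C) - 2*((2*n+1:ℕ):C)*((2*n+1:ℕ):C) - 2*K.r := by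
    rw [Finset.sum_sub_distrib, Finset.sum_sub_distrib, ← Finset.mul_sum, K.sum_diag,
      ← Finset.mul_sum, swap, Finset.sum_const, Finset.card_univ,
      Fintype.card_fin, nsmul_eq_mul]
    ring
  have hr : K.ξ K.r = ∑ j, K.ξ (K.S (K.e j) (K.e j)) := by
    unfold r; rw [map_sum]
  rw [hr, Finset.sum_congr rfl fun j _ => step1 j, Finset.sum_add_distrib,
    Finset.sum_add_distrib, Finset.sum_congr rfl fun j _ => inner j, final1]
  linear_combination hzero

end Trace

end KenmotsuManifold

open KenmotsuManifold in
/-- If a Kenmotsu manifold of dimension `2n+1` admits a `*`-Ricci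
soliton, then its scalar curvature satisfies `ξ(r) = -2(r + 2n(2n+1))`. -/
theorem stmt5 {n : ℕ} {C : Type*} [CommRing C] [Algebra ℝ C]
    (K : KenmotsuManifold n C) (V : Derivation ℝ C C) (l : ℝ)
    (h : K.IsStarRicciSoliton V l) :
    K.ξ K.r = (-2 : ℝ) • (K.r + algebraMap ℝ C (2 * n * (2 * n + 1))) := by
  by_cases hn : n = 0
  · subst hn
    have hr : K.r = 0 := by
      unfold KenmotsuManifold.r KenmotsuManifold.S
      rw [Finset.sum_eq_zero]
      intro i _
      rw [Finset.sum_eq_zero]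
      intro j _
      have hij : j = i := by omega
      rw [hij, K.Rm_self, K.g_zero_left]
    rw [hr, map_zero]
    norm_num
  · have h := K.xi_r (K.a_zero hn)
    rw [h, Algebra.smul_def, map_neg, map_ofNat]
    have hcast : (algebraMap ℝ C) (2 * (n:ℝ) * (2 * (n:ℝ) + 1)) = ((2*n*(2*n+1) : ℕ) : C) := by
      rw [show ((2:ℝ) * (n:ℝ) * (2*(n:ℝ)+1) : ℝ) = ((2*n*(2*n+1) : ℕ) : ℝ) by push_cast; ring,
        map_natCast]
    rw [hcast]
    push_cast
    ring
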